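/- Two robots placed at adjacent vertices of the infinite triangular grid, each with 1-hop visibility and no agreement on axis orientation, cannot be gathered by any deterministic algorithm even under a fully synchronous scheduler: for any deterministic move rule invariant under the symmetry swapping the two robots' local frames, either both robots swap positions forever (2-cycle between two configurations) or connectivity of the visibility graph is broken, so the configuration never reaches a single vertex. -/
import Mathlib


/-- Vertex set of the infinite triangular grid. -/
def TriGrid : Set (ℝ × ℝ) :=
  {p | (∃ k i : ℤ, Even i ∧ p = ((k : ℝ), Real.sqrt 3 / 2 * (i : ℝ))) ∨
       (∃ k i : ℤ, Odd i ∧ p = ((k : ℝ) + 1/2, Real.sqrt 3 / 2 * (i : ℝ)))}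

/-- Adjacency: Euclidean distance exactly 1 (stated via squared distance). -/
def TriAdj (p q : ℝ × ℝ) : Prop := (p.1 - q.1)^2 + (p.2 - q.2)^2 = 1

/-- The seven possible moves: stay, or move along one of the six incident edges. -/
def Moves : Set (ℝ × ℝ) :=
  {(0, 0), (1, 0), (-1, 0), (1/2, Real.sqrt 3 / 2), (1/2, -(Real.sqrt 3 / 2)),
   (-(1/2), Real.sqrt 3 / 2), (-(1/2), -(Real.sqrt 3 / 2))}

/-- If both `v` and `m` are unit vectors and `v - 2m` has norm at most 1,
then `m = v` (Cauchy-Schwarz equality case). -/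
lemma unit_move (v m : ℝ × ℝ) (hm : m.1^2 + m.2^2 = 1) (hv : v.1^2 + v.2^2 = 1)
    (hc : (v.1 - 2*m.1)^2 + (v.2 - 2*m.2)^2 ≤ 1) : m = v := by
  have hz : (v.1 - m.1)^2 + (v.2 - m.2)^2 ≤ 0 := by nlinarith [hv, hm, hc]
  have h1 : v.1 - m.1 = 0 := by nlinarith [sq_nonneg (v.1 - m.1), sq_nonneg (v.2 - m.2)]
  have h2 : v.2 - m.2 = 0 := by nlinarith [sq_nonneg (v.1 - m.1), sq_nonneg (v.2 - m.2)]
  exact Prod.ext_iff.mpr ⟨by linarith, by linarith⟩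

/-- Key step lemma: if `v` is a unit vector, `m` is a move, and `v - 2m` still
has norm at most 1, then `m = 0` (stay) or `m = v` (swap). -/
lemma move_key (v m : ℝ × ℝ) (hm : m ∈ Moves) (hv : v.1^2 + v.2^2 = 1)
    (hc : (v.1 - 2*m.1)^2 + (v.2 - 2*m.2)^2 ≤ 1) : m = 0 ∨ m = v := by
  have s3 : Real.sqrt 3 ^ 2 = 3 := Real.sq_sqrt (by norm_num)
  simp only [Moves, Set.mem_insert_iff, Set.mem_singleton_iff] at hm
  rcases hm with h|h|h|h|h|h|h <;> subst h
  · exact Or.inl rfl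
  all_goals
    refine Or.inr (unit_move v _ ?_ hv hc)
    simp only
    nlinarith [s3]

/-- Impossibility of gathering two robots with 1-hop visibility and no
agreement on orientation, even fully synchronously.  The two robots start on
adjacent grid vertices; their local frames are related by the point reflection
through the midpoint of the joining edge, so their local views coincide and the
deterministic algorithm `A` (a map from the local view, i.e. the relative
position of the other robot, to one of the 7 moves) makes robot 1 move by
`A(view)` and robot 2 by `−A(view)` in global coordinates.  If the visibility
graph stays connected (distance ≤ 1) and positions stay on the grid, then at
every step the two robots' positions are swapped or unchanged, and they never
occupy the same vertex: gathering never happens. -/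
theorem two_robots_cannot_gather
    (A : ℝ × ℝ → ℝ × ℝ) (hA : ∀ view, A view ∈ Moves)
    (p₁ p₂ : ℕ → ℝ × ℝ)
    (hg1 : p₁ 0 ∈ TriGrid) (hg2 : p₂ 0 ∈ TriGrid)
    (hadj : TriAdj (p₁ 0) (p₂ 0))
    (hstep1 : ∀ t, p₁ (t+1) = p₁ t + A (p₂ t - p₁ t))
    (hstep2 : ∀ t, p₂ (t+1) = p₂ t - A (p₂ t - p₁ t))
    (hconn : ∀ t, ((p₁ t).1 - (p₂ t).1)^2 + ((p₁ t).2 - (p₂ t).2)^2 ≤ 1) :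
    (∀ t, (p₁ t = p₁ 0 ∧ p₂ t = p₂ 0) ∨ (p₁ t = p₂ 0 ∧ p₂ t = p₁ 0)) ∧
    (∀ t, p₁ t ≠ p₂ t) := by
  unfold TriAdj at hadj
  have hne : p₁ 0 ≠ p₂ 0 := by
    intro h
    rw [h] at hadj
    norm_num at hadj
  have inv : ∀ t, (p₁ t = p₁ 0 ∧ p₂ t = p₂ 0) ∨ (p₁ t = p₂ 0 ∧ p₂ t = p₁ 0) := by
    intro t
    induction t with
    | zero => exact Or.inl ⟨rfl, rfl⟩
    | succ t ih =>
      set v : ℝ × ℝ := p₂ t - p₁ t with hvdef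
      have hv1 : v.1 = (p₂ t).1 - (p₁ t).1 := rfl
      have hv2 : v.2 = (p₂ t).2 - (p₁ t).2 := rfl
      have hvnorm : v.1^2 + v.2^2 = 1 := by
        rcases ih with ⟨h1, h2⟩ | ⟨h1, h2⟩ <;>
          rw [hv1, hv2, h1, h2] <;> linear_combination hadj
      have hc : (v.1 - 2*(A v).1)^2 + (v.2 - 2*(A v).2)^2 ≤ 1 := by
        have h := hconn (t+1)
        rw [hstep1 t, hstep2 t] at h
        simp only [Prod.fst_add, Prod.snd_add, Prod.fst_sub, Prod.snd_sub] at h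
        rw [hv1, hv2]
        nlinarith [h]
      rcases move_key v (A v) (hA v) hvnorm hc with h0 | hvm
      · have e1 : p₁ (t+1) = p₁ t := by rw [hstep1 t, ← hvdef, h0, add_zero]
        have e2 : p₂ (t+1) = p₂ t := by rw [hstep2 t, ← hvdef, h0, sub_zero]
        rw [e1, e2]; exact ih
      · have e1 : p₁ (t+1) = p₂ t := by
          rw [hstep1 t, ← hvdef, hvm, hvdef]; ring
        have e2 : p₂ (t+1) = p₁ t := by
          rw [hstep2 t, ← hvdef, hvm, hvdef]; ring
        rw [e1, e2]
        rcases ih with ⟨h1, h2⟩ | ⟨h1, h2⟩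
        · exact Or.inr ⟨h2, h1⟩
        · exact Or.inl ⟨h2, h1⟩
  refine ⟨inv, fun t => ?_⟩
  rcases inv t with ⟨h1, h2⟩ | ⟨h1, h2⟩
  · rw [h1, h2]; exact hne
  · rw [h1, h2]; exact hne.symm
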